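/- (Theorem 3, error bound) Let σ > 0, let p be an even positive integer, and let ε > 0 be such that 1 − ε (p−1)!! σ^p − (ε²/2)(2p−1)!! σ^{2p} > 0. Let H be the differential entropy of the density p(x) = C(ε) p_G(x) exp(−ε x^p), and let H₁ = log(√(2π) σ (1 − ε σ^p (p−1)!!)) + (1 − ε σ^p (p−1)!!)^{−1} · (1/2 + ε σ^p ((p−1)!! − (1/2)(p+1)!!)) be the first-order entropy approximation. Then |H − H₁| ≤ log(1 + β_p (ε²/2)(2p−1)!! σ^{2p}) + β_p (ε²/4)(2p+1)!! σ^{2p} + β_p (ε³/2)(3p−1)!! σ^{3p}, where β_p = (1 − ε (p−1)!! σ^p − (ε²/2)(2p−1)!! σ^{2p})^{−1}. -/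

import Mathlib

open MeasureTheory Real

/-- The centered Gaussian density with standard deviation `σ`. -/
noncomputable def pG (σ x : ℝ) : ℝ :=
  (1 / (Real.sqrt (2 * Real.pi) * σ)) * Real.exp (-x ^ 2 / (2 * σ ^ 2))

/-!
Write the density as `Z⁻¹ w` with `w = p_G e^{-ε x^p}` and `Z = ∫ w`. Since
`-log w = log (√(2π) σ) + x²/(2σ²) + ε x^p`, the entropy is `log (√(2π) σ) + log Z + T / Z` with
`T = ∫ w (x²/(2σ²) + ε x^p)`, while `H₁ = log (√(2π) σ) + log (1 - A) + t₁ / (1 - A)` with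
`A = ε (p-1)‼ σ^p`. Integrating `1 - s ≤ e^{-s} ≤ 1 - s + s²/2` against the Gaussian moments
`∫ p_G x^{2k} = (2k-1)‼ σ^{2k}` gives `Z ∈ [1 - A, 1 - A + B]` and
`T ∈ [t₁ - 2B, t₁ - 2B + u + v]`, where `β B`, `β u`, `β v` are the quantities in the error bound.
The bound then follows from `0 ≤ log Z - log (1 - A) ≤ log (1 + β B)` and elementary estimates of
`T / Z - t₁ / (1 - A)`.
-/

open scoped Nat
open Set

lemma integral_pow_two_mul_mul_exp_neg_mul_sq {b : ℝ} (hb : 0 < b) (k : ℕ) :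
    ∫ x : ℝ, x ^ (2 * k) * exp (-b * x ^ 2) = (2 * k - 1)‼ / (2 * b) ^ k * √(π / b) := by
  have hk : (((2 * k : ℕ) : ℝ) + 1) / 2 = k + 1 / 2 := by push_cast; ring
  have hb_pow : b ^ (-(((2 * k : ℕ) : ℝ) + 1) / 2) = (b ^ k)⁻¹ * (√b)⁻¹ := by
    rw [show -(((2 * k : ℕ) : ℝ) + 1) / 2 = -(k : ℝ) + -(1 / 2) by push_cast; ring,
      rpow_add hb, rpow_neg hb.le, rpow_natCast, rpow_neg hb.le, sqrt_eq_rpow]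
  calc ∫ x : ℝ, x ^ (2 * k) * exp (-b * x ^ 2)
      = ∫ x : ℝ, |x| ^ ((2 * k : ℕ) : ℝ) * exp (-b * |x| ^ (2 : ℝ)) := by
        refine integral_congr_ae (ae_of_all _ fun x => ?_)
        simp only [rpow_natCast, rpow_two, sq_abs, (even_two_mul k).pow_abs]
    _ = 2 * (b ^ (-(((2 * k : ℕ) : ℝ) + 1) / 2) * (1 / 2) *
          Gamma ((((2 * k : ℕ) : ℝ) + 1) / 2)) := by
        rw [integral_comp_abs (f := fun x => x ^ ((2 * k : ℕ) : ℝ) * exp (-b * x ^ (2 : ℝ))),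
          integral_rpow_mul_exp_neg_mul_rpow two_pos
            (neg_one_lt_zero.trans_le (Nat.cast_nonneg _)) hb]
    _ = (2 * k - 1)‼ / (2 * b) ^ k * √(π / b) := by
        rw [hk, Gamma_nat_add_half, hb_pow, sqrt_div pi_pos.le, mul_pow]
        field_simp

section Gaussian

variable {σ : ℝ}

lemma pG_pos (hσ : 0 < σ) (x : ℝ) : 0 < pG σ x := by
  unfold pG; positivity

lemma pG_eq_mul_exp_neg_mul_sq (σ x : ℝ) :
    pG σ x = (√(2 * π) * σ)⁻¹ * exp (-(2 * σ ^ 2)⁻¹ * x ^ 2) := by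
  rw [pG, one_div, neg_mul, neg_div, div_eq_inv_mul]

lemma log_pG (hσ : 0 < σ) (x : ℝ) :
    log (pG σ x) = -log (√(2 * π) * σ) - x ^ 2 / (2 * σ ^ 2) := by
  rw [pG, log_mul (by positivity) (exp_ne_zero _), log_exp, one_div, log_inv]
  ring

lemma integrable_pG_mul_pow (hσ : 0 < σ) (n : ℕ) : Integrable fun x => pG σ x * x ^ n := by
  have hb : 0 < (2 * σ ^ 2)⁻¹ := by positivity
  refine ((integrable_rpow_mul_exp_neg_mul_sq hb (s := n) ?_).const_mul
    (√(2 * π) * σ)⁻¹).congr (ae_of_all _ fun x => ?_)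
  · exact neg_one_lt_zero.trans_le (Nat.cast_nonneg _)
  · simp only [rpow_natCast, pG_eq_mul_exp_neg_mul_sq]
    ring

lemma integral_pG_mul_pow (hσ : 0 < σ) {n : ℕ} (hn : Even n) :
    ∫ x, pG σ x * x ^ n = (n - 1)‼ * σ ^ n := by
  obtain ⟨k, rfl⟩ := hn.two_dvd
  have hb : 0 < (2 * σ ^ 2)⁻¹ := by positivity
  have hπσ : √(π / (2 * σ ^ 2)⁻¹) = √(2 * π) * σ := by
    rw [div_inv_eq_mul, show π * (2 * σ ^ 2) = 2 * π * σ ^ 2 by ring,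
      sqrt_mul (by positivity), sqrt_sq hσ.le]
  simp_rw [pG_eq_mul_exp_neg_mul_sq, mul_assoc, integral_const_mul, mul_comm (exp _),
    integral_pow_two_mul_mul_exp_neg_mul_sq hb, hπσ, pow_mul]
  field_simp
  rw [← mul_pow, one_div_mul_cancel (by positivity), one_pow]

end Gaussian

lemma exp_neg_le_one_sub_add_sq_div_two {t : ℝ} (ht : 0 ≤ t) :
    exp (-t) ≤ 1 - t + t ^ 2 / 2 := by
  have hq : 0 < 1 + t + t ^ 2 / 2 := by positivity
  calc exp (-t) = (exp t)⁻¹ := exp_neg t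
    _ ≤ (1 + t + t ^ 2 / 2)⁻¹ := inv_anti₀ hq (quadratic_le_exp_of_nonneg ht)
    _ ≤ 1 - t + t ^ 2 / 2 := by
        rw [inv_le_iff_one_le_mul₀ hq]
        nlinarith [pow_nonneg ht 4]

lemma integral_mul_exp_neg_mem_Icc {α : Type*} [MeasurableSpace α] {μ : Measure α}
    {g h : α → ℝ} (hg : ∀ x, 0 ≤ g x) (hh : ∀ x, 0 ≤ h x) (hg_int : Integrable g μ)
    (hgh_int : Integrable (fun x => g x * h x) μ)
    (hgh2_int : Integrable (fun x => g x * h x ^ 2) μ)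
    (hge_int : Integrable (fun x => g x * exp (-h x)) μ) :
    ∫ x, g x * exp (-h x) ∂μ ∈ Icc (∫ x, g x ∂μ - ∫ x, g x * h x ∂μ)
      (∫ x, g x ∂μ - ∫ x, g x * h x ∂μ + (∫ x, g x * h x ^ 2 ∂μ) / 2) := by
  have hlin : Integrable (fun x => g x - g x * h x) μ := hg_int.sub hgh_int
  have hquad : Integrable (fun x => g x * h x ^ 2 / 2) μ := hgh2_int.div_const 2
  constructor
  · calc ∫ x, g x ∂μ - ∫ x, g x * h x ∂μ = ∫ x, (g x - g x * h x) ∂μ :=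
          (integral_sub hg_int hgh_int).symm
      _ ≤ ∫ x, g x * exp (-h x) ∂μ := integral_mono hlin hge_int fun x => by
          linear_combination mul_le_mul_of_nonneg_left (one_sub_le_exp_neg (h x)) (hg x)
  · calc ∫ x, g x * exp (-h x) ∂μ ≤ ∫ x, (g x - g x * h x + g x * h x ^ 2 / 2) ∂μ :=
          integral_mono hge_int (hlin.add hquad) fun x => by
            linear_combination
              mul_le_mul_of_nonneg_left (exp_neg_le_one_sub_add_sq_div_two (hh x)) (hg x)
      _ = _ := by rw [integral_add hlin hquad, integral_sub hg_int hgh_int, integral_div]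

lemma integral_negMulLog_inv_integral_mul {α : Type*} [MeasurableSpace α] {μ : Measure α}
    {w : α → ℝ} (hw : Integrable w μ) (hw_log : Integrable (fun x => negMulLog (w x)) μ)
    (hZ : ∫ x, w x ∂μ ≠ 0) :
    ∫ x, negMulLog ((∫ y, w y ∂μ)⁻¹ * w x) ∂μ =
      log (∫ x, w x ∂μ) + (∫ x, w x ∂μ)⁻¹ * ∫ x, negMulLog (w x) ∂μ := by
  simp_rw [negMulLog_mul]
  rw [integral_add (hw.mul_const _) (hw_log.const_mul _), integral_mul_const, integral_const_mul,
    negMulLog, log_inv]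
  field_simp

noncomputable def perturbedMoment (σ ε : ℝ) (p n : ℕ) : ℝ :=
  ∫ x, pG σ x * x ^ n * exp (-ε * x ^ p)

/-- The quantity `T = ∫ w (x²/(2σ²) + ε x^p)`, i.e. `∫ w (-log w - log (√(2π) σ))`,
for `w = p_G e^{-ε x^p}`. -/
noncomputable def perturbedEnergy (σ ε : ℝ) (p : ℕ) : ℝ :=
  perturbedMoment σ ε p 2 / (2 * σ ^ 2) + ε * perturbedMoment σ ε p p

lemma perturbedMoment_zero_eq (σ ε : ℝ) (p : ℕ) :
    perturbedMoment σ ε p 0 = ∫ x, pG σ x * exp (-ε * x ^ p) := by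
  simp [perturbedMoment]

section Perturbed

variable {σ ε : ℝ} {p : ℕ}

lemma integrable_pG_mul_pow_mul_exp (hσ : 0 < σ) (hε : 0 ≤ ε) (hp : Even p) (n : ℕ) :
    Integrable fun x => pG σ x * x ^ n * exp (-ε * x ^ p) := by
  refine (integrable_pG_mul_pow hσ n).mono
    (by unfold pG; fun_prop : Continuous _).aestronglyMeasurable (ae_of_all _ fun x => ?_)
  rw [norm_mul, norm_of_nonneg (exp_pos _).le]
  refine mul_le_of_le_one_right (norm_nonneg _) (exp_le_one_iff.2 ?_)
  rw [neg_mul, neg_nonpos]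
  exact mul_nonneg hε (hp.pow_nonneg x)

lemma perturbedMoment_zero_pos (hσ : 0 < σ) (hε : 0 ≤ ε) (hp : Even p) :
    0 < perturbedMoment σ ε p 0 := by
  rw [perturbedMoment, integral_pos_iff_support_of_nonneg
    (fun x => by have := pG_pos hσ x; positivity) (integrable_pG_mul_pow_mul_exp hσ hε hp 0)]
  simp [Function.support, (pG_pos hσ _).ne']

lemma perturbedEnergy_nonneg (hσ : 0 < σ) (hε : 0 ≤ ε) (hp : Even p) :
    0 ≤ perturbedEnergy σ ε p := by
  have hmoment : ∀ n, Even n → 0 ≤ perturbedMoment σ ε p n := fun n hn =>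
    integral_nonneg fun x => by have := pG_pos hσ x; have := hn.pow_nonneg x; positivity
  have := hmoment 2 even_two
  have := hmoment p hp
  unfold perturbedEnergy
  positivity

lemma perturbedMoment_mem_Icc (hσ : 0 < σ) (hε : 0 ≤ ε) (hp : Even p) {n : ℕ} (hn : Even n) :
    perturbedMoment σ ε p n ∈ Icc ((n - 1)‼ * σ ^ n - ε * ((n + p - 1)‼ * σ ^ (n + p)))
      ((n - 1)‼ * σ ^ n - ε * ((n + p - 1)‼ * σ ^ (n + p)) +
        ε ^ 2 * ((n + 2 * p - 1)‼ * σ ^ (n + 2 * p)) / 2) := by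
  have hshift : ∀ (m : ℕ) (c : ℝ) (F : ℝ → ℝ), (∀ x, F x = c * x ^ m) →
      Integrable (fun x => pG σ x * x ^ n * F x) ∧
        ∫ x, pG σ x * x ^ n * F x = c * ∫ x, pG σ x * x ^ (n + m) := by
    intro m c F hF
    have hpt : ∀ x, pG σ x * x ^ n * F x = c * (pG σ x * x ^ (n + m)) := fun x => by
      rw [hF, pow_add]; ring
    simp_rw [hpt]
    exact ⟨(integrable_pG_mul_pow hσ _).const_mul c, integral_const_mul _ _⟩
  obtain ⟨hint₁, hval₁⟩ := hshift p ε (fun x => ε * x ^ p) fun x => rfl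
  obtain ⟨hint₂, hval₂⟩ := hshift (2 * p) (ε ^ 2) (fun x => (ε * x ^ p) ^ 2) fun x => by ring
  have key := integral_mul_exp_neg_mem_Icc (μ := volume)
    (fun x => mul_nonneg (pG_pos hσ x).le (hn.pow_nonneg x))
    (fun x => mul_nonneg hε (hp.pow_nonneg x)) (integrable_pG_mul_pow hσ n) hint₁ hint₂
    (by simpa only [neg_mul] using integrable_pG_mul_pow_mul_exp hσ hε hp n)
  rw [hval₁, hval₂, integral_pG_mul_pow hσ hn, integral_pG_mul_pow hσ (hn.add hp),
    integral_pG_mul_pow hσ (hn.add (even_two_mul p))] at key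
  simpa only [perturbedMoment, neg_mul] using key

lemma perturbedEnergy_mem_Icc (hσ : 0 < σ) (hε : 0 ≤ ε) (hp : Even p) :
    perturbedEnergy σ ε p ∈ Icc
      (1 / 2 + ε * σ ^ p * ((p - 1)‼ - 1 / 2 * (p + 1)‼) - ε ^ 2 * (2 * p - 1)‼ * σ ^ (2 * p))
      (1 / 2 + ε * σ ^ p * ((p - 1)‼ - 1 / 2 * (p + 1)‼) - ε ^ 2 * (2 * p - 1)‼ * σ ^ (2 * p) +
        ε ^ 2 / 4 * (2 * p + 1)‼ * σ ^ (2 * p) + ε ^ 3 / 2 * (3 * p - 1)‼ * σ ^ (3 * p)) := by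
  obtain ⟨h₂l, h₂u⟩ := perturbedMoment_mem_Icc hσ hε hp even_two
  obtain ⟨hₚl, hₚu⟩ := perturbedMoment_mem_Icc hσ hε hp hp
  simp only [show 2 + p - 1 = p + 1 by omega, show 2 + 2 * p - 1 = 2 * p + 1 by omega]
    at h₂l h₂u
  simp only [show p + p = 2 * p by ring, show p + 2 * p = 3 * p by ring] at hₚl hₚu
  have hσ₂ : (0 : ℝ) < 2 * σ ^ 2 := by positivity
  have hlow : ((2 - 1)‼ * σ ^ 2 - ε * ((p + 1)‼ * σ ^ (2 + p))) / (2 * σ ^ 2) =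
      1 / 2 - ε * (p + 1)‼ * σ ^ p / 2 := by
    rw [pow_add]; field_simp; norm_num
  have hhigh : ε ^ 2 * ((2 * p + 1)‼ * σ ^ (2 + 2 * p)) / 2 / (2 * σ ^ 2) =
      ε ^ 2 / 4 * (2 * p + 1)‼ * σ ^ (2 * p) := by
    rw [pow_add]; field_simp; ring
  have h₂l' := div_le_div_of_nonneg_right h₂l hσ₂.le
  have h₂u' := div_le_div_of_nonneg_right h₂u hσ₂.le
  rw [add_div, hlow, hhigh] at h₂u'
  rw [hlow] at h₂l'
  unfold perturbedEnergy
  constructor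
  · linear_combination h₂l' + mul_le_mul_of_nonneg_left hₚl hε
  · linear_combination h₂u' + mul_le_mul_of_nonneg_left hₚu hε

lemma negMulLog_pG_mul_exp (hσ : 0 < σ) (x : ℝ) :
    negMulLog (pG σ x * exp (-ε * x ^ p)) =
      log (√(2 * π) * σ) * (pG σ x * exp (-ε * x ^ p)) +
        pG σ x * x ^ 2 * exp (-ε * x ^ p) / (2 * σ ^ 2) +
        ε * (pG σ x * x ^ p * exp (-ε * x ^ p)) := by
  rw [negMulLog, log_mul (pG_pos hσ x).ne' (exp_ne_zero _), log_exp, log_pG hσ]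
  ring

lemma integral_negMulLog_normalized_pG_mul_exp (hσ : 0 < σ) (hε : 0 ≤ ε) (hp : Even p) :
    ∫ x, negMulLog ((perturbedMoment σ ε p 0)⁻¹ * (pG σ x * exp (-ε * x ^ p))) =
      log (√(2 * π) * σ) + log (perturbedMoment σ ε p 0) +
        perturbedEnergy σ ε p / perturbedMoment σ ε p 0 := by
  have hint := integrable_pG_mul_pow_mul_exp hσ hε hp
  have hw : Integrable fun x => pG σ x * exp (-ε * x ^ p) := by simpa using hint 0
  have h₀ := hw.const_mul (log (√(2 * π) * σ))
  have h₂ := (hint 2).div_const (2 * σ ^ 2)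
  have h₀₂ : Integrable fun x => log (√(2 * π) * σ) * (pG σ x * exp (-ε * x ^ p)) +
      pG σ x * x ^ 2 * exp (-ε * x ^ p) / (2 * σ ^ 2) := h₀.add h₂
  have hₚ := (hint p).const_mul ε
  have hw_log : Integrable fun x => negMulLog (pG σ x * exp (-ε * x ^ p)) := by
    simp_rw [negMulLog_pG_mul_exp hσ]
    exact h₀₂.add hₚ
  have hZ := perturbedMoment_zero_pos hσ hε hp
  rw [perturbedMoment_zero_eq] at hZ ⊢
  rw [integral_negMulLog_inv_integral_mul hw hw_log hZ.ne']
  simp_rw [negMulLog_pG_mul_exp hσ]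
  rw [integral_add h₀₂ hₚ, integral_add h₀ h₂, integral_const_mul, integral_div,
    integral_const_mul]
  simp only [perturbedEnergy, perturbedMoment, neg_mul] at hZ ⊢
  field_simp
  ring

end Perturbed

section Elementary

variable {D B : ℝ}

lemma one_add_inv_sub_mul_eq_div (hBD : B < D) : 1 + (D - B)⁻¹ * B = D / (D - B) := by
  have : D - B ≠ 0 := (sub_pos.2 hBD).ne'
  field_simp
  ring

lemma div_le_log_one_add_inv_sub_mul (hB : 0 ≤ B) (hBD : B < D) :
    B / D ≤ log (1 + (D - B)⁻¹ * B) := by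
  have hD : 0 < D := hB.trans_lt hBD
  have hDB : 0 < D - B := sub_pos.2 hBD
  calc B / D = 1 - (D / (D - B))⁻¹ := by field_simp; ring
    _ ≤ log (1 + (D - B)⁻¹ * B) := by
      rw [one_add_inv_sub_mul_eq_div hBD]
      exact one_sub_inv_le_log_of_pos (div_pos hD hDB)

lemma log_sub_log_le_log_one_add_inv_sub_mul {Z : ℝ} (hB : 0 ≤ B) (hBD : B < D)
    (hZ : Z ∈ Icc D (D + B)) : log Z - log D ≤ log (1 + (D - B)⁻¹ * B) := by
  have hD : 0 < D := hB.trans_lt hBD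
  have hDB : 0 < D - B := sub_pos.2 hBD
  have hZD : Z * (D - B) ≤ D * D := by
    nlinarith [mul_le_mul_of_nonneg_right hZ.2 hDB.le]
  rw [one_add_inv_sub_mul_eq_div hBD, ← log_div (hD.trans_le hZ.1).ne' hD.ne']
  exact log_le_log (div_pos (hD.trans_le hZ.1) hD) ((div_le_div_iff₀ hD hDB).2 hZD)

lemma div_sub_div_le_three_mul_div {Z T t : ℝ} (hB : 0 ≤ B) (hBD : B < D)
    (hZ : Z ∈ Icc D (D + B)) (hT : t - 2 * B ≤ T) (ht : t ≤ D + B) :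
    t / D - T / Z ≤ 3 * B / D := by
  obtain ⟨hZl, hZu⟩ := hZ
  have hD : 0 < D := hB.trans_lt hBD
  have hZ : 0 < Z := hD.trans_le hZl
  calc t / D - T / Z ≤ t / D - (t - 2 * B) / Z := by gcongr
    _ = (t * (Z - D) + 2 * B * D) / (D * Z) := by field_simp; ring
    _ ≤ (3 * B * Z) / (D * Z) := by
        gcongr
        -- `t (Z - D) ≤ (D + B) (Z - D) ≤ B Z`, the last step because `Z ≤ D + B`
        nlinarith [mul_le_mul_of_nonneg_right ht (sub_nonneg.2 hZl)]
    _ = 3 * B / D := by field_simp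

lemma abs_log_add_div_sub_le {Z T t u v : ℝ} (hB : 0 ≤ B) (hBD : B < D)
    (hZ : Z ∈ Icc D (D + B)) (hT₀ : 0 ≤ T) (hT : T ∈ Icc (t - 2 * B) (t - 2 * B + u + v))
    (ht : t ≤ D + B) (hu : 2 * B ≤ u) (hv : 0 ≤ v) :
    |log Z + T / Z - (log D + t / D)| ≤
      log (1 + (D - B)⁻¹ * B) + (D - B)⁻¹ * u + (D - B)⁻¹ * v := by
  have hD : 0 < D := hB.trans_lt hBD
  have hDB : 0 < D - B := sub_pos.2 hBD
  have hinv : D⁻¹ ≤ (D - B)⁻¹ := inv_anti₀ hDB (by linarith)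
  have hlog_nonneg : 0 ≤ log Z - log D := sub_nonneg.2 (log_le_log hD hZ.1)
  have hlog_le := log_sub_log_le_log_one_add_inv_sub_mul hB hBD hZ
  have hBD_log := div_le_log_one_add_inv_sub_mul hB hBD
  have hratio_lower := div_sub_div_le_three_mul_div hB hBD hZ hT.1 ht
  have hratio_upper : T / Z - t / D ≤ (u + v) * D⁻¹ :=
    calc T / Z - t / D ≤ T / D - t / D := by gcongr; exact hZ.1
      _ = (T - t) * D⁻¹ := by ring
      _ ≤ (u + v) * D⁻¹ := by gcongr; linarith [hT.2]
  have huv : (u + v) * D⁻¹ ≤ (u + v) * (D - B)⁻¹ := by gcongr; linarith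
  have h2B : 2 * B / D ≤ u * (D - B)⁻¹ := by
    rw [div_eq_mul_inv]; exact mul_le_mul hu hinv (inv_nonneg.2 hD.le) (by linarith)
  have hv' : 0 ≤ (D - B)⁻¹ * v := mul_nonneg (inv_nonneg.2 hDB.le) hv
  rw [abs_le]
  constructor
  · have : 3 * B / D = B / D + 2 * B / D := by ring
    linarith
  · linarith

end Elementary

lemma half_add_mul_doubleFactorial_sub_le {a : ℝ} {p : ℕ} (hp : 2 ≤ p) (ha : 0 ≤ a)
    (ha₁ : a * (p - 1)‼ ≤ 1) :
    1 / 2 + a * ((p - 1)‼ - 1 / 2 * (p + 1)‼) ≤ 1 - a * (p - 1)‼ := by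
  have hp' : (2 : ℝ) ≤ p := by exact_mod_cast hp
  rw [Nat.doubleFactorial_add_one]
  push_cast
  nlinarith [mul_nonneg (mul_nonneg ha (Nat.cast_nonneg (p - 1)‼)) (sub_nonneg.2 hp')]

lemma four_mul_doubleFactorial_le {n : ℕ} (hn : 2 ≤ n) : 4 * (2 * n - 1)‼ ≤ (2 * n + 1)‼ := by
  rw [Nat.doubleFactorial_add_one]
  exact Nat.mul_le_mul_right _ (by omega)

theorem stmt8 (σ : ℝ) (hσ : 0 < σ) (p : ℕ) (hp : 0 < p) (hpe : Even p)
    (ε : ℝ) (hε : 0 < ε)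
    (hpos : 0 < 1 - ε * (Nat.doubleFactorial (p - 1) : ℝ) * σ ^ p -
        ε ^ 2 / 2 * (Nat.doubleFactorial (2 * p - 1) : ℝ) * σ ^ (2 * p))
    (C : ℝ) (hC : C = (∫ x : ℝ, pG σ x * Real.exp (-ε * x ^ p))⁻¹)
    (f : ℝ → ℝ) (hf : ∀ x, f x = C * pG σ x * Real.exp (-ε * x ^ p))
    (H : ℝ) (hH : H = -∫ x : ℝ, f x * Real.log (f x))
    (H₁ : ℝ) (hH₁ : H₁ =
      Real.log (Real.sqrt (2 * Real.pi) * σ *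
          (1 - ε * σ ^ p * (Nat.doubleFactorial (p - 1) : ℝ))) +
        (1 - ε * σ ^ p * (Nat.doubleFactorial (p - 1) : ℝ))⁻¹ *
          (1 / 2 + ε * σ ^ p * ((Nat.doubleFactorial (p - 1) : ℝ) -
            (1 / 2) * (Nat.doubleFactorial (p + 1) : ℝ))))
    (β : ℝ) (hβ : β = (1 - ε * (Nat.doubleFactorial (p - 1) : ℝ) * σ ^ p -
        ε ^ 2 / 2 * (Nat.doubleFactorial (2 * p - 1) : ℝ) * σ ^ (2 * p))⁻¹) :
    |H - H₁| ≤
      Real.log (1 + β * (ε ^ 2 / 2) * (Nat.doubleFactorial (2 * p - 1) : ℝ) * σ ^ (2 * p)) +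
        β * (ε ^ 2 / 4) * (Nat.doubleFactorial (2 * p + 1) : ℝ) * σ ^ (2 * p) +
        β * (ε ^ 3 / 2) * (Nat.doubleFactorial (3 * p - 1) : ℝ) * σ ^ (3 * p) := by
  have hp₂ : 2 ≤ p := by obtain ⟨k, rfl⟩ := hpe; omega
  set A := ε * σ ^ p * ((p - 1)‼ : ℝ)
  set B := ε ^ 2 / 2 * ((2 * p - 1)‼ : ℝ) * σ ^ (2 * p) with hB_def
  have hB : 0 ≤ B := by positivity
  have hBD : B < 1 - A := by linarith
  have hZ : perturbedMoment σ ε p 0 ∈ Icc (1 - A) (1 - A + B) := by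
    convert perturbedMoment_mem_Icc hσ hε.le hpe Even.zero using 2 <;> simp [A, B] <;> ring
  have hH' : H = log (√(2 * π) * σ) + log (perturbedMoment σ ε p 0) +
      perturbedEnergy σ ε p / perturbedMoment σ ε p 0 := by
    rw [hH, ← integral_negMulLog_normalized_pG_mul_exp hσ hε.le hpe, ← integral_neg]
    simp only [hf, hC, negMulLog, perturbedMoment_zero_eq, mul_assoc, neg_mul]
  have hH₁' : H₁ = log (√(2 * π) * σ) + log (1 - A) +
      (1 / 2 + ε * σ ^ p * ((p - 1)‼ - 1 / 2 * (p + 1)‼)) / (1 - A) := by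
    rw [hH₁, log_mul (by positivity) (by linarith), inv_mul_eq_div]
  have ht := (half_add_mul_doubleFactorial_sub_le (a := ε * σ ^ p) hp₂ (by positivity)
    (by linarith)).trans (le_add_of_nonneg_right hB)
  have hu : 2 * B ≤ ε ^ 2 / 4 * (2 * p + 1)‼ * σ ^ (2 * p) := by
    have h4 : (4 * (2 * p - 1)‼ : ℝ) ≤ (2 * p + 1)‼ := mod_cast four_mul_doubleFactorial_le hp₂
    nlinarith [mul_le_mul_of_nonneg_left h4 (by positivity : 0 ≤ ε ^ 2 * σ ^ (2 * p))]
  have key := abs_log_add_div_sub_le hB hBD hZ (perturbedEnergy_nonneg hσ hε.le hpe)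
    (v := ε ^ 3 / 2 * (3 * p - 1)‼ * σ ^ (3 * p))
    (by convert perturbedEnergy_mem_Icc hσ hε.le hpe using 2 <;> ring) ht hu (by positivity)
  have hβ' : β = (1 - A - B)⁻¹ := by rw [hβ]; ring
  calc |H - H₁| = _ := by rw [hH', hH₁']; congr 1; ring
    _ ≤ _ := key
    _ = _ := by rw [hβ', hB_def]; ring_nf
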